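/- arXiv:2112.00993 — 3 statements merged into one kernel-verified Lean document; each statement's English description precedes it below -/
import Mathlib

section
/- Let F be a real q×q matrix, d ∈ ℝ^q a vector with all positive entries, b = (1,...,1) ∈ ℝ^q, and r, μ real numbers with Fb = r·d. Suppose there exists a vector u ∈ ℝ^q not collinear with b such that ∑ᵢ dᵢuᵢ = 0 and Fu = μ·d. Then F is singular (has nontrivial kernel). -/
theorem stmt_0 (q : ℕ) (F : Matrix (Fin q) (Fin q) ℝ) (d : Fin q → ℝ)
    (hd : ∀ i, 0 < d i) (r μ : ℝ)
    (hFb : F.mulVec (fun _ => 1) = r • d)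
    (u : Fin q → ℝ)
    (hnc : ∀ c : ℝ, u ≠ c • (fun _ => (1 : ℝ)))
    (hsum : ∑ i, d i * u i = 0)
    (hFu : F.mulVec u = μ • d) :
    ∃ v : Fin q → ℝ, v ≠ 0 ∧ F.mulVec v = 0 := by
  rcases eq_or_ne r 0 with hr | hr
  · refine ⟨fun _ => 1, ?_, by rw [hFb, hr, zero_smul]⟩
    intro h
    rcases Nat.eq_zero_or_pos q with hq | hq
    · exact hnc 0 (by subst hq; funext i; exact absurd i.2 (by simp))
    · exact one_ne_zero (congrFun h ⟨0, hq⟩)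
  · refine ⟨(μ / r) • (fun _ => (1 : ℝ)) - u, ?_, ?_⟩
    · intro h
      exact hnc (μ / r) (by rw [sub_eq_zero] at h; exact h.symm)
    · rw [Matrix.mulVec_sub, Matrix.mulVec_smul, hFb, hFu, smul_smul,
        div_mul_cancel₀ _ hr, sub_self]
end

section
/- Let q ≥ 1, let dᵢ > 0, c < 1/2, and suppose fᵢᵢ = ((6c−1)/4)dᵢ + (1/2)∑ⱼ [j; i i] and fᵢⱼ = (1/2)∑ₖ [k; i j] for i ≠ j, where [k; i j] ≥ 0 are symmetric in all three indices and satisfy ∑_{j,k} [k; i j] = dᵢ(1 − 2c) for each i. If c > 3/10, then fᵢᵢ > ∑_{j≠i} |fᵢⱼ| for every i. -/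
/-! The Wang–Ziller identity turns the off-diagonal row sum into
`(dᵢ/2)(1 - 2c) - (1/2) ∑ₖ [k; i i]`, which is beaten by the diagonal entry because
`(6c - 1)/4 > (1 - 2c)/2` exactly when `c > 3/10`. -/

open Finset

lemma sum_erase_abs_eq_half_sub {ι : Type*} [Fintype ι] [DecidableEq ι]
    {T : ι → ι → ι → ℝ} (hnn : ∀ i j k, 0 ≤ T k i j) {F : Matrix ι ι ℝ}
    (hoff : ∀ i j, i ≠ j → F i j = (1/2) * ∑ k, T k i j) (i : ι) :
    ∑ j ∈ univ.erase i, |F i j| = (1/2) * (∑ j, ∑ k, T k i j - ∑ k, T k i i) := by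
  have habs : ∀ j ∈ univ.erase i, |F i j| = (1/2) * ∑ k, T k i j := fun j hj => by
    rw [hoff i j (ne_of_mem_erase hj).symm, abs_of_nonneg]
    exact mul_nonneg (by norm_num) (sum_nonneg fun k _ => hnn i j k)
  rw [sum_congr rfl habs, ← mul_sum, sum_erase_eq_sub (mem_univ i)]

theorem stmt_15_general (q : ℕ) (d : Fin q → ℝ) (hd : ∀ i, 0 < d i)
    (c : ℝ) (hc' : 3/10 < c)
    (T : Fin q → Fin q → Fin q → ℝ)
    (hnn : ∀ i j k, 0 ≤ T k i j)
    (hWZ : ∀ i, ∑ j, ∑ k, T k i j = d i * (1 - 2*c))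
    (F : Matrix (Fin q) (Fin q) ℝ)
    (hdiag : ∀ i, F i i = ((6*c - 1)/4) * d i + (1/2) * ∑ j, T j i i)
    (hoff : ∀ i j, i ≠ j → F i j = (1/2) * ∑ k, T k i j) :
    ∀ i, ∑ j ∈ Finset.univ.erase i, |F i j| < F i i := by
  intro i
  have hcoeff : (1/2) * (d i * (1 - 2*c)) < ((6*c - 1)/4) * d i := by
    nlinarith [mul_pos (hd i) (sub_pos.mpr hc')]
  have hdiag_nonneg : 0 ≤ ∑ k, T k i i := sum_nonneg fun k _ => hnn i i k
  rw [sum_erase_abs_eq_half_sub hnn hoff, hWZ, hdiag]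
  linarith

theorem stmt_15 (q : ℕ) (hq : 1 ≤ q) (d : Fin q → ℝ) (hd : ∀ i, 0 < d i)
    (c : ℝ) (hc : c < 1/2) (hc' : 3/10 < c)
    (T : Fin q → Fin q → Fin q → ℝ)
    (hnn : ∀ i j k, 0 ≤ T k i j)
    (hsym₁ : ∀ i j k, T k i j = T k j i)
    (hsym₂ : ∀ i j k, T k i j = T j i k)
    (hWZ : ∀ i, ∑ j, ∑ k, T k i j = d i * (1 - 2*c))
    (F : Matrix (Fin q) (Fin q) ℝ)
    (hdiag : ∀ i, F i i = ((6*c - 1)/4) * d i + (1/2) * ∑ j, T j i i)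
    (hoff : ∀ i j, i ≠ j → F i j = (1/2) * ∑ k, T k i j) :
    ∀ i, ∑ j ∈ Finset.univ.erase i, |F i j| < F i i :=
  stmt_15_general q d hd c hc' T hnn hWZ F hdiag hoff
end

section
/- Under the hypotheses of the previous statement (structure constants [k; i j] ≥ 0 fully symmetric with ∑_{j,k}[k; i j] = dᵢ(1−2c), dᵢ > 0, and 3/10 < c ≤ 1/2), the symmetric matrix F with fᵢᵢ = ((6c−1)/4)dᵢ + (1/2)∑ⱼ[j; i i] and fᵢⱼ = (1/2)∑ₖ[k; i j] (i ≠ j) is positive definite. -/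
/-!
`F` is symmetric with nonnegative off-diagonal entries, and the Casimir identity
`∑ j k, T k i j = dᵢ (1 - 2c)` computes its off-diagonal row sums exactly. The diagonal
exceeds them by `(10c - 3)/4 · dᵢ + ∑ k, T k i i > 0`, so `F` is strictly diagonally dominant,
and Gershgorin's circle theorem puts every eigenvalue of `F` in `(0, ∞)`.
-/

open Finset
open scoped ComplexOrder

section Gershgorin

variable {𝕜 n : Type*} [RCLike 𝕜] [Fintype n] [DecidableEq n] {A : Matrix n n 𝕜}

theorem Matrix.IsHermitian.hasEigenvalue_eigenvalues (hA : A.IsHermitian) (i : n) :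
    Module.End.HasEigenvalue (Matrix.toLin' A) (hA.eigenvalues i : 𝕜) := by
  refine Module.End.hasEigenvalue_of_hasEigenvector (x := (hA.eigenvectorBasis i).ofLp) ⟨?_, ?_⟩
  · rw [Module.End.mem_eigenspace_iff, Matrix.toLin'_apply, hA.mulVec_eigenvectorBasis,
      RCLike.real_smul_eq_coe_smul (K := 𝕜)]
  · exact fun h => hA.eigenvectorBasis.orthonormal.ne_zero i
      (by simpa using congrArg (WithLp.toLp 2) h)

theorem Matrix.IsHermitian.posDef_of_sum_row_lt_diag (hA : A.IsHermitian)
    (h : ∀ k, ∑ j ∈ univ.erase k, ‖A k j‖ < RCLike.re (A k k)) : A.PosDef := by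
  refine hA.posDef_iff_eigenvalues_pos.mpr fun i => ?_
  obtain ⟨k, hk⟩ := eigenvalue_mem_ball (hA.hasEigenvalue_eigenvalues i)
  rw [Metric.mem_closedBall, dist_comm, ← hA.coe_re_apply_self k, dist_eq_norm,
    ← RCLike.ofReal_sub, RCLike.norm_ofReal] at hk
  linarith [h k, le_abs_self (RCLike.re (A k k) - hA.eigenvalues i)]

end Gershgorin

theorem stmt_16_general (q : ℕ) (d : Fin q → ℝ) (hd : ∀ i, 0 < d i)
    (c : ℝ) (hc' : 3/10 < c)
    (T : Fin q → Fin q → Fin q → ℝ)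
    (hnn : ∀ i j k, 0 ≤ T k i j)
    (hsym₁ : ∀ i j k, T k i j = T k j i)
    (hWZ : ∀ i, ∑ j, ∑ k, T k i j = d i * (1 - 2*c))
    (F : Matrix (Fin q) (Fin q) ℝ)
    (hdiag : ∀ i, F i i = ((6*c - 1)/4) * d i + (1/2) * ∑ j, T j i i)
    (hoff : ∀ i j, i ≠ j → F i j = (1/2) * ∑ k, T k i j) :
    F.PosDef := by
  have hF_symm : F.IsHermitian := by
    refine Matrix.IsHermitian.ext fun i j => ?_
    rcases eq_or_ne i j with rfl | hij
    · rfl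
    · simp only [star_trivial, hoff i j hij, hoff j i hij.symm, hsym₁]
  have hF_offdiag_sum (i : Fin q) :
      ∑ j ∈ univ.erase i, ‖F i j‖ = (1/2) * (d i * (1 - 2*c) - ∑ k, T k i i) := by
    rw [← hWZ i, ← add_sum_erase _ _ (mem_univ i), add_sub_cancel_left, mul_sum]
    refine sum_congr rfl fun j hj => ?_
    rw [hoff i j (ne_of_mem_erase hj).symm, Real.norm_of_nonneg
      (mul_nonneg (by norm_num) (sum_nonneg fun k _ => hnn i j k))]
  refine hF_symm.posDef_of_sum_row_lt_diag fun i => ?_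
  rw [hF_offdiag_sum, RCLike.re_to_real, hdiag]
  linarith [mul_pos (sub_pos.mpr hc') (hd i), sum_nonneg fun k (_ : k ∈ univ) => hnn i i k]

theorem stmt_16 (q : ℕ) (hq : 1 ≤ q) (d : Fin q → ℝ) (hd : ∀ i, 0 < d i)
    (c : ℝ) (hc : c ≤ 1/2) (hc' : 3/10 < c)
    (T : Fin q → Fin q → Fin q → ℝ)
    (hnn : ∀ i j k, 0 ≤ T k i j)
    (hsym₁ : ∀ i j k, T k i j = T k j i)
    (hsym₂ : ∀ i j k, T k i j = T j i k)
    (hWZ : ∀ i, ∑ j, ∑ k, T k i j = d i * (1 - 2*c))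
    (F : Matrix (Fin q) (Fin q) ℝ)
    (hdiag : ∀ i, F i i = ((6*c - 1)/4) * d i + (1/2) * ∑ j, T j i i)
    (hoff : ∀ i j, i ≠ j → F i j = (1/2) * ∑ k, T k i j) :
    F.PosDef :=
  stmt_16_general q d hd c hc' T hnn hsym₁ hWZ F hdiag hoff
end
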